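/- arXiv:2106.11922 — 3 statements merged into one kernel-verified Lean document; each statement's English description precedes it below -/
import Mathlib

section
/- For every k ≥ 0, ∑_{ν partition : ν₁ = k} z^{2·odd(ν')} q^{|ν|} = [qz² + q²]_{q²}^k / (q²;q²)_k, where odd(ν') denotes the number of odd-length columns of ν and [A+B]_p^k = ∑_{j=0}^{k} A^j B^{k−j} · binom_p(k,j) with binom_p the Gaussian (p-)binomial coefficient. -/
/-- Integer partitions, encoded as weakly decreasing eventually-zero sequences
`ν₁ = f 0, ν₂ = f 1, …`. -/
abbrev YD : Type := {f : ℕ → ℕ // (∀ i j : ℕ, i ≤ j → f j ≤ f i) ∧ ∃ N, f N = 0}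

/-- The size `|ν|` of a partition. -/
noncomputable def psize (f : ℕ → ℕ) : ℕ := ∑ᶠ i, f i

/-- `conj f c` is the length `ν'_{c+1}` of the `(c+1)`-st column of the partition `f`. -/
noncomputable def conj (f : ℕ → ℕ) (c : ℕ) : ℕ := Nat.card {r : ℕ | c + 1 ≤ f r}

/-- `odd(ν')`: the number of odd-length columns of `ν`. -/
noncomputable def oddConj (f : ℕ → ℕ) : ℕ := Nat.card {c : ℕ | Odd (conj f c)}

/-- The q-Pochhammer symbol `(p;p)_m = ∏_{j=1}^m (1 - p^j)`. -/
def qPoch (p : ℂ) (m : ℕ) : ℂ := ∏ j ∈ Finset.range m, (1 - p ^ (j + 1))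

/-- The Gaussian binomial coefficient `binom_p(k,j) = (p;p)_k / ((p;p)_j (p;p)_{k-j})`. -/
noncomputable def gbinom (p : ℂ) (k j : ℕ) : ℂ := qPoch p k / (qPoch p j * qPoch p (k - j))

/-!
Conjugation turns a partition with largest part `k` into one with exactly `k` parts, and odd
columns into odd parts. Let `G(a, b, k)` be the generating function of partitions with exactly
`k` parts, odd parts weighted by `a` and even parts by `b`. Removing the first column leaves a
partition with some `j ≤ k` parts: the `k - j` parts equal to `1` disappear and the parity of
every other part flips, so `G(a, b, k) = q ^ k * ∑ j ≤ k, a ^ (k - j) * G(b, a, j)`. The closed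
form satisfies the same recursion, by the finite identity
`∑ s ≤ m, p ^ s / (p; p)_s = 1 / (p; p)_m`, and when `q` is not a root of unity this recursion
has only one solution taking the value `1` at `k = 0`.
-/

open Finset

namespace GkFormula

section Conjugate

variable {f : ℕ → ℕ} {N : ℕ}

lemma lt_conj_iff (hf : Antitone f) (hN : f N = 0) (c r : ℕ) : r < conj f c ↔ c < f r := by
  have hex : ∃ m, f m ≤ c := ⟨N, by simp [hN]⟩
  have hrows : ∀ r, r < Nat.find hex ↔ c < f r := fun r => by
    rw [Nat.lt_find_iff]
    exact ⟨fun h => not_le.1 (h r le_rfl), fun h m hm => not_le.2 (h.trans_le (hf hm))⟩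
  have hconj : conj f c = Nat.find hex := by
    rw [conj, show {r | c + 1 ≤ f r} = Set.Iio (Nat.find hex) from
      Set.ext fun r => (hrows r).symm]
    simp
  rw [hconj, hrows]

lemma conj_eq_zero_iff (hf : Antitone f) (hN : f N = 0) (c : ℕ) : conj f c = 0 ↔ f 0 ≤ c := by
  rw [← not_lt, ← lt_conj_iff hf hN, Nat.pos_iff_ne_zero, not_not]

lemma conj_antitone (hf : Antitone f) (hN : f N = 0) : Antitone (conj f) := by
  intro c c' hcc'
  by_contra! h
  have h1 := (lt_conj_iff hf hN c' _).1 h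
  have h2 := (lt_conj_iff hf hN c _).not.1 (lt_irrefl _)
  omega

lemma conj_conj (hf : Antitone f) (hN : f N = 0) : conj (conj f) = f := by
  have hN' : conj f (f 0) = 0 := (conj_eq_zero_iff hf hN _).2 le_rfl
  funext r
  refine eq_of_forall_lt_iff fun c => ?_
  rw [lt_conj_iff (conj_antitone hf hN) hN', lt_conj_iff hf hN]

lemma conj_eq_card_filter (hf : Antitone f) (hN : f N = 0) (c : ℕ) :
    conj f c = #{r ∈ range N | c < f r} := by
  suffices {r ∈ range N | c < f r} = range (conj f c) by rw [this, card_range]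
  ext r
  simp only [mem_filter, mem_range, lt_conj_iff hf hN]
  refine ⟨fun h => h.2, fun h => ⟨?_, h⟩⟩
  by_contra! hr
  have := hf hr
  omega

lemma psize_eq_sum_conj (hf : Antitone f) (hN : f N = 0) {k : ℕ} (hk : f 0 ≤ k) :
    psize f = ∑ c ∈ range k, conj f c := by
  have hsupp : Function.support f ⊆ range N := fun r hr => by
    by_contra h
    exact hr (by simpa [hN] using hf (not_lt.1 (mem_range.not.1 h)))
  calc psize f = ∑ r ∈ range N, f r := finsum_eq_sum_of_support_subset f hsupp
    _ = ∑ r ∈ range N, #{c ∈ range k | c < f r} := by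
        refine sum_congr rfl fun r _ => ?_
        rw [show {c ∈ range k | c < f r} = range (f r) by
          ext c; simp only [mem_filter, mem_range]; have := hf (Nat.zero_le r); omega]
        exact (card_range _).symm
    _ = ∑ c ∈ range k, #{r ∈ range N | c < f r} := by simp only [card_filter]; exact sum_comm
    _ = ∑ c ∈ range k, conj f c := by simp only [conj_eq_card_filter hf hN]

lemma oddConj_eq_card_filter (hf : Antitone f) (hN : f N = 0) {k : ℕ} (hk : f 0 ≤ k) :
    oddConj f = #{c ∈ range k | Odd (conj f c)} := by
  suffices {c | Odd (conj f c)} = ↑{c ∈ range k | Odd (conj f c)} by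
    rw [oddConj, this, Nat.card_coe_set_eq, Set.ncard_coe_finset]
  ext c
  simp only [Set.mem_ofPred_eq, coe_filter, mem_range, iff_and_self]
  intro hodd
  by_contra! hc
  rw [(conj_eq_zero_iff hf hN c).2 (hk.trans hc)] at hodd
  exact Nat.not_odd_zero hodd

end Conjugate

def PartitionOfLength (k : ℕ) : Type := {g : ℕ → ℕ // Antitone g ∧ ∀ i, 0 < g i ↔ i < k}

def partWeight (q a b : ℂ) (n : ℕ) : ℂ := (if Odd n then a else b) * q ^ n

def weight (q a b : ℂ) (k : ℕ) (g : ℕ → ℕ) : ℂ := ∏ c ∈ range k, partWeight q a b (g c)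

noncomputable def oddEvenGF (q a b : ℂ) (k : ℕ) : ℂ :=
  ∑' g : PartitionOfLength k, weight q a b k g.1

lemma weight_eq_pow_card_odd (q a b : ℂ) (k : ℕ) (g : ℕ → ℕ) :
    weight q a b k g =
      a ^ #{c ∈ range k | Odd (g c)} * b ^ #{c ∈ range k | ¬Odd (g c)} *
        q ^ ∑ c ∈ range k, g c := by
  simp only [weight, partWeight]
  rw [prod_mul_distrib, prod_ite, prod_const, prod_const, prod_pow_eq_pow_sum]

namespace PartitionOfLength

variable {k : ℕ} (g : PartitionOfLength k)

lemma eq_zero_of_le {i : ℕ} (hi : k ≤ i) : g.1 i = 0 :=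
  Nat.eq_zero_of_not_pos ((g.2.2 i).not.2 hi.not_gt)

lemma conj_zero : conj g.1 0 = k :=
  eq_of_forall_lt_iff fun r => (lt_conj_iff g.2.1 (g.eq_zero_of_le le_rfl) 0 r).trans (g.2.2 r)

lemma conj_one_le : conj g.1 1 ≤ k :=
  (conj_antitone g.2.1 (g.eq_zero_of_le le_rfl) zero_le_one).trans g.conj_zero.le

end PartitionOfLength

noncomputable def conjEquiv (k : ℕ) : {ν : YD // ν.1 0 = k} ≃ PartitionOfLength k where
  toFun ν := ⟨conj ν.1.1, conj_antitone ν.1.2.1 ν.1.2.2.choose_spec, fun i => by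
    rw [Nat.pos_iff_ne_zero, Ne, conj_eq_zero_iff ν.1.2.1 ν.1.2.2.choose_spec, ν.2, not_le]⟩
  invFun g := ⟨⟨conj g.1, conj_antitone g.2.1 (g.eq_zero_of_le le_rfl),
    g.1 0, (conj_eq_zero_iff g.2.1 (g.eq_zero_of_le le_rfl) _).2 le_rfl⟩, g.conj_zero⟩
  left_inv ν := Subtype.ext (Subtype.ext (conj_conj ν.1.2.1 ν.1.2.2.choose_spec))
  right_inv g := Subtype.ext (conj_conj g.2.1 (g.eq_zero_of_le le_rfl))

lemma tsum_eq_oddEvenGF (q z : ℂ) (k : ℕ) :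
    ∑' ν : {ν : YD // ν.val 0 = k}, z ^ (2 * oddConj ν.val.val) * q ^ psize ν.val.val =
      oddEvenGF q (z ^ 2) 1 k := by
  rw [oddEvenGF, ← (conjEquiv k).symm.tsum_eq]
  refine tsum_congr fun g => ?_
  have h0 := g.eq_zero_of_le le_rfl
  have hf := conj_antitone g.2.1 h0
  have hN := (conj_eq_zero_iff g.2.1 h0 _).2 le_rfl
  have hk := g.conj_zero.le
  change z ^ (2 * oddConj (conj g.1)) * q ^ psize (conj g.1) = _
  rw [oddConj_eq_card_filter hf hN hk, psize_eq_sum_conj hf hN hk, conj_conj g.2.1 h0,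
    weight_eq_pow_card_odd, one_pow, mul_one, pow_mul]

lemma summable_pi_prod {α : Type*} {f : α → ℝ} (hf0 : 0 ≤ f) (hf : Summable f) :
    ∀ k, Summable fun n : Fin k → α => ∏ i, f (n i)
  | 0 => .of_finite
  | k + 1 => by
    rw [← (Fin.consEquiv fun _ => α).summable_iff]
    simpa [Function.comp_def, Fin.prod_univ_succ] using
      hf.mul_of_nonneg (summable_pi_prod hf0 hf k) hf0 fun n => prod_nonneg fun i _ => hf0 (n i)

lemma norm_partWeight_le (q a b : ℂ) (n : ℕ) : ‖partWeight q a b n‖ ≤ max ‖a‖ ‖b‖ * ‖q‖ ^ n := by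
  rw [partWeight, norm_mul, norm_pow]
  gcongr
  split_ifs
  exacts [le_max_left _ _, le_max_right _ _]

lemma summable_weight {q : ℂ} (hq : ‖q‖ < 1) (a b : ℂ) (k : ℕ) :
    Summable fun g : PartitionOfLength k => weight q a b k g.1 := by
  set C := max ‖a‖ ‖b‖
  have hgeom : Summable fun n : ℕ => C * ‖q‖ ^ n :=
    (summable_geometric_of_lt_one (norm_nonneg q) hq).mul_left C
  have hinj : Function.Injective fun (g : PartitionOfLength k) (i : Fin k) => g.1 i := by
    intro g g' h
    refine Subtype.ext (funext fun i => ?_)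
    rcases lt_or_ge i k with hi | hi
    · exact congrFun h ⟨i, hi⟩
    · rw [g.eq_zero_of_le hi, g'.eq_zero_of_le hi]
  refine Summable.of_norm_bounded
    ((summable_pi_prod (fun n => by positivity) hgeom k).comp_injective hinj) fun g => ?_
  rw [weight, norm_prod, ← Fin.prod_univ_eq_prod_range]
  exact prod_le_prod (fun _ _ => norm_nonneg _) fun i _ => norm_partWeight_le q a b _

section FirstColumn

variable {q a b : ℂ} {k : ℕ}

def addFirstColumn (k : ℕ) (m : ℕ → ℕ) : ℕ → ℕ := fun c => if c < k then m c + 1 else 0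

lemma antitone_addFirstColumn {m : ℕ → ℕ} (hm : Antitone m) : Antitone (addFirstColumn k m) := by
  intro i i' h
  have := hm h
  simp only [addFirstColumn]
  split_ifs <;> omega

lemma partWeight_zero : partWeight q a b 0 = b := by simp [partWeight]

lemma partWeight_succ (n : ℕ) : partWeight q a b (n + 1) = q * partWeight q b a n := by
  simp only [partWeight, Nat.odd_add_one, ite_not, pow_succ]
  ring

lemma weight_addFirstColumn {j : ℕ} (hjk : j ≤ k) {m : ℕ → ℕ} (hm : ∀ c, j ≤ c → m c = 0) :
    weight q a b k (addFirstColumn k m) = q ^ k * (a ^ (k - j) * weight q b a j m) := by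
  calc weight q a b k (addFirstColumn k m)
      = ∏ c ∈ range k, q * partWeight q b a (m c) := prod_congr rfl fun c hc => by
        rw [addFirstColumn, if_pos (mem_range.1 hc), partWeight_succ]
    _ = q ^ k * ((∏ c ∈ range j, partWeight q b a (m c)) *
          ∏ c ∈ Ico j k, partWeight q b a (m c)) := by
        rw [prod_mul_distrib, prod_const, card_range, prod_range_mul_prod_Ico _ hjk]
    _ = q ^ k * (a ^ (k - j) * weight q b a j m) := by
        have hpad : ∏ c ∈ Ico j k, partWeight q b a (m c) = a ^ (k - j) := by
          rw [prod_congr rfl fun c hc => by rw [hm c (mem_Ico.1 hc).1, partWeight_zero],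
            prod_const, Nat.card_Ico]
        rw [hpad, weight, mul_comm (∏ c ∈ range j, _)]

noncomputable def removeFirstColumnEquiv (k : ℕ) :
    PartitionOfLength k ≃ Σ j : Fin (k + 1), PartitionOfLength j where
  toFun g := ⟨⟨conj g.1 1, Nat.lt_succ_of_le g.conj_one_le⟩,
    ⟨fun c => g.1 c - 1, fun _ _ h => Nat.sub_le_sub_right (g.2.1 h) 1, fun i => by
      show 0 < g.1 i - 1 ↔ _
      rw [lt_conj_iff g.2.1 (g.eq_zero_of_le le_rfl)]
      omega⟩⟩
  invFun x := ⟨addFirstColumn k x.2.1, antitone_addFirstColumn x.2.2.1, fun i => by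
    simp only [addFirstColumn]
    split_ifs <;> omega⟩
  left_inv g := Subtype.ext <| funext fun c => by
    simp only [addFirstColumn]
    have := g.2.2 c
    split_ifs <;> omega
  right_inv := by
    rintro ⟨j, m⟩
    have hjk : j.1 ≤ k := Nat.le_of_lt_succ j.2
    have hcol : conj (addFirstColumn k m.1) 1 = j := by
      refine eq_of_forall_lt_iff fun r => ?_
      have := m.2.2 r
      rw [lt_conj_iff (antitone_addFirstColumn m.2.1) (N := k) (by simp [addFirstColumn]),
        addFirstColumn]
      split_ifs <;> omega
    refine Sigma.subtype_ext (Fin.ext hcol) (funext fun c => ?_)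
    simp only [addFirstColumn]
    have := m.2.2 c
    split_ifs <;> omega

end FirstColumn

def SatisfiesSwapRecursion {R : Type*} [CommRing R] (q : R) (X : R → R → ℕ → R) : Prop :=
  ∀ a b k, X a b k = q ^ k * ∑ j ∈ range (k + 1), a ^ (k - j) * X b a j

/-- Applied twice, the recursion reads `X a b k = q ^ (2 * k) * X a b k + (lower order terms)`. -/
lemma SatisfiesSwapRecursion.unique {R : Type*} [CommRing R] [IsDomain R] {q : R}
    (hq : ¬IsOfFinOrder q) {X Y : R → R → ℕ → R} (hX : SatisfiesSwapRecursion q X)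
    (hY : SatisfiesSwapRecursion q Y) (h0 : ∀ a b, X a b 0 = Y a b 0) : X = Y := by
  suffices h : ∀ k a b, X a b k = Y a b k from
    funext fun a => funext fun b => funext fun k => h k a b
  intro k
  induction k using Nat.strong_induction_on with
  | _ k ih =>
  rcases k.eq_zero_or_pos with rfl | hk
  · exact h0
  have hswap : ∀ a b, X a b k - Y a b k = q ^ k * (X b a k - Y b a k) := fun a b => by
    have hlow : ∑ j ∈ range k, a ^ (k - j) * X b a j = ∑ j ∈ range k, a ^ (k - j) * Y b a j :=
      sum_congr rfl fun j hj => by rw [ih j (mem_range.1 hj)]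
    rw [hX a b k, hY a b k, sum_range_succ, sum_range_succ, hlow, Nat.sub_self, pow_zero]
    ring
  have hunit : (1 : R) - q ^ (2 * k) ≠ 0 := sub_ne_zero.2 fun h =>
    hq (isOfFinOrder_iff_pow_eq_one.2 ⟨2 * k, by omega, h.symm⟩)
  intro a b
  have hfix : (X a b k - Y a b k) * (1 - q ^ (2 * k)) = 0 := by
    linear_combination hswap a b + q ^ k * hswap b a
  exact sub_eq_zero.1 ((mul_eq_zero.1 hfix).resolve_right hunit)

lemma oddEvenGF_zero (q a b : ℂ) : oddEvenGF q a b 0 = 1 := by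
  let g₀ : PartitionOfLength 0 := ⟨0, antitone_const, by simp⟩
  rw [oddEvenGF, tsum_eq_single g₀ fun g hg =>
    (hg (Subtype.ext (funext fun i => g.eq_zero_of_le (Nat.zero_le i)))).elim]
  simp [weight]

lemma oddEvenGF_satisfiesSwapRecursion {q : ℂ} (hq : ‖q‖ < 1) :
    SatisfiesSwapRecursion q (oddEvenGF q) := by
  intro a b k
  let e := (removeFirstColumnEquiv k).symm
  let w : PartitionOfLength k → ℂ := fun g => weight q a b k g.1
  have hsum : Summable (w ∘ e) := e.summable_iff.2 (summable_weight hq a b k)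
  calc oddEvenGF q a b k = ∑' x, (w ∘ e) x := (e.tsum_eq w).symm
    _ = ∑ j : Fin (k + 1), ∑' m : PartitionOfLength j,
          q ^ k * (a ^ (k - j) * weight q b a j m.1) := by
        rw [hsum.tsum_sigma, tsum_fintype]
        refine sum_congr rfl fun j _ => tsum_congr fun m => ?_
        exact weight_addFirstColumn (Nat.le_of_lt_succ j.2) fun c hc => m.eq_zero_of_le hc
    _ = q ^ k * ∑ j ∈ range (k + 1), a ^ (k - j) * oddEvenGF q b a j := by
        simp_rw [tsum_mul_left, oddEvenGF, ← mul_sum]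
        rw [Fin.sum_univ_eq_sum_range
          (fun j => a ^ (k - j) * ∑' m : PartitionOfLength j, weight q b a j m.1)]

lemma qPoch_ne_zero {p : ℂ} (hp : ¬IsOfFinOrder p) (m : ℕ) : qPoch p m ≠ 0 :=
  prod_ne_zero_iff.2 fun j _ => sub_ne_zero.2 fun h =>
    hp (isOfFinOrder_iff_pow_eq_one.2 ⟨j + 1, j.succ_pos, h.symm⟩)

lemma sum_range_pow_div_qPoch {p : ℂ} (hp : ¬IsOfFinOrder p) (m : ℕ) :
    ∑ s ∈ range (m + 1), p ^ s / qPoch p s = (qPoch p m)⁻¹ := by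
  induction m with
  | zero => simp [qPoch]
  | succ m ih =>
    have hstep : qPoch p (m + 1) = qPoch p m * (1 - p ^ (m + 1)) := prod_range_succ _ _
    have hm1 := qPoch_ne_zero hp (m + 1)
    rw [hstep] at hm1
    have hm := left_ne_zero_of_mul hm1
    have hfac := right_ne_zero_of_mul hm1
    rw [sum_range_succ, ih, hstep]
    field_simp
    ring

noncomputable def closedForm (q a b : ℂ) (k : ℕ) : ℂ :=
  ∑ j ∈ range (k + 1),
    (q * a) ^ j * (q ^ 2 * b) ^ (k - j) / (qPoch (q ^ 2) j * qPoch (q ^ 2) (k - j))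

lemma closedForm_zero (q a b : ℂ) : closedForm q a b 0 = 1 := by
  simp [closedForm, qPoch]

lemma closedForm_satisfiesSwapRecursion {q : ℂ} (hq : ¬IsOfFinOrder q) :
    SatisfiesSwapRecursion q (closedForm q) := by
  have hp : ¬IsOfFinOrder (q ^ 2) := by simpa [isOfFinOrder_pow] using hq
  intro a b k
  let f : ℕ → ℕ → ℂ := fun j s =>
    a ^ (k - j) * b ^ j * q ^ (k + j) / qPoch (q ^ 2) j * ((q ^ 2) ^ s / qPoch (q ^ 2) s)
  symm
  calc q ^ k * ∑ i ∈ range (k + 1), a ^ (k - i) * closedForm q b a i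
      = ∑ i ∈ range (k + 1), ∑ j ∈ range (i + 1), f j (i - j) := by
        rw [mul_sum]
        refine sum_congr rfl fun i hi => ?_
        rw [closedForm, mul_sum, mul_sum]
        refine sum_congr rfl fun j hj => ?_
        obtain ⟨s, rfl⟩ := Nat.exists_eq_add_of_le (Nat.le_of_lt_succ (mem_range.1 hj))
        obtain ⟨t, rfl⟩ := Nat.exists_eq_add_of_le (Nat.le_of_lt_succ (mem_range.1 hi))
        simp only [f, Nat.add_sub_cancel_left, add_assoc]
        rw [show j + (s + t) - (j + s) = t by omega]
        field_simp
        ring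
    _ = ∑ j ∈ range (k + 1), ∑ s ∈ range (k + 1 - j), f j s := sum_range_diag_flip _ _
    _ = ∑ j ∈ range (k + 1),
          a ^ (k - j) * b ^ j * q ^ (k + j) / (qPoch (q ^ 2) j * qPoch (q ^ 2) (k - j)) := by
        refine sum_congr rfl fun j hj => ?_
        rw [← mul_sum, show k + 1 - j = k - j + 1 by have := mem_range.1 hj; omega,
          sum_range_pow_div_qPoch hp, div_mul_eq_div_div,
          div_eq_mul_inv _ (qPoch (q ^ 2) (k - j))]
    _ = closedForm q a b k := by
        rw [closedForm, ← sum_range_reflect]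
        refine sum_congr rfl fun j hj => ?_
        obtain ⟨t, rfl⟩ := Nat.exists_eq_add_of_le (Nat.le_of_lt_succ (mem_range.1 hj))
        rw [show j + t + 1 - 1 - j = t by omega, show j + t - t = j by omega]
        simp only [Nat.add_sub_cancel_left]
        ring

lemma closedForm_eq_div_qPoch {q : ℂ} (hq : ¬IsOfFinOrder q) (a b : ℂ) (k : ℕ) :
    closedForm q a b k =
      (∑ j ∈ range (k + 1), (q * a) ^ j * (q ^ 2 * b) ^ (k - j) * gbinom (q ^ 2) k j) /
        qPoch (q ^ 2) k := by
  have hp : ¬IsOfFinOrder (q ^ 2) := by simpa [isOfFinOrder_pow] using hq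
  rw [closedForm, sum_div]
  refine sum_congr rfl fun j _ => ?_
  have := qPoch_ne_zero hp k
  rw [gbinom]
  field_simp

end GkFormula

/-- Lemma (g_k formula): for every k ≥ 0,
∑_{ν : ν₁ = k} z^{2·odd(ν')} q^{|ν|} = [qz² + q²]_{q²}^k / (q²;q²)_k,
where [A+B]_p^k = ∑_{j=0}^k A^j B^{k-j} binom_p(k,j). -/
theorem gk_formula (q z : ℂ) (hq : ‖q‖ < 1) (k : ℕ) :
    ∑' ν : {ν : YD // ν.val 0 = k},
        z ^ (2 * oddConj ν.val.val) * q ^ psize ν.val.val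
      = (∑ j ∈ Finset.range (k + 1),
            (q * z ^ 2) ^ j * (q ^ 2) ^ (k - j) * gbinom (q ^ 2) k j)
          / qPoch (q ^ 2) k := by
  have hfin : ¬IsOfFinOrder q := fun h => hq.ne h.norm_eq_one
  open GkFormula in
  rw [tsum_eq_oddEvenGF, (oddEvenGF_satisfiesSwapRecursion hq).unique hfin
    (closedForm_satisfiesSwapRecursion hfin)
    (fun a b => by rw [oddEvenGF_zero, closedForm_zero]), closedForm_eq_div_qPoch hfin]
  simp only [mul_one]
end

section
/- For the skew RS map of arrays a ∈ ℤ^N weakly decreasing and b a sub-array of a (b_i = a_{j_i} with j₁ > ⋯ > j_M): if (a', b') = RS(a, b), then b' = (b₁+1, …, b_M+1), and a' agrees with a except on a set of M indices where the corresponding entries of a are increased by 1. -/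
/-- The admissible ℤ-valued edge configuration on the rectangular lattice with
west boundary `a` and south boundary `b`: `faceZ a b j i = (E, N)` are the east and
north edge values of the face in (0-based) column `j`, row `i`, determined by the
local rules: if `W ≠ S` then `E = W, N = S`; if `W = S` then `E = N = S + 1`. -/
def faceZ (a b : ℕ → ℤ) : ℕ → ℕ → ℤ × ℤ
  | 0, 0 =>
      if a 0 = b 0 then (b 0 + 1, b 0 + 1) else (a 0, b 0)
  | 0, i + 1 =>
      let W := a (i + 1)
      let S := (faceZ a b 0 i).2
      if W = S then (S + 1, S + 1) else (W, S)
  | j + 1, 0 =>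
      let W := (faceZ a b j 0).1
      let S := b (j + 1)
      if W = S then (S + 1, S + 1) else (W, S)
  | j + 1, i + 1 =>
      let W := (faceZ a b j (i + 1)).1
      let S := (faceZ a b (j + 1) i).2
      if W = S then (S + 1, S + 1) else (W, S)
  termination_by j i => (j, i)

/-!
Column `j` of the lattice acts on the array `w` of its west edges by a single bump: its south
value `s` travels north unchanged up to the first row `f` with `w f = s`, where both outputs
become `s + 1`; when `w` is weakly decreasing no later row carries `s + 1`, so the column
replaces `w f` by `s + 1` and emits `s + 1` at the top. Inductively, the west array of every
column is weakly decreasing and equals `a` except for `+1` at the rows bumped so far. A row with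
`a`-value `b_j` that has not yet been bumped exists by pigeonhole: the injective `jdx` provides
at least as many rows of value `b_j` as there are columns up to `j` with south value `b_j`, and
each earlier such column bumped exactly one of them.
-/

theorem AntitoneOn.update_first_add_one {w : ℕ → ℤ} {s : ℤ} {f N : ℕ}
    (hw : AntitoneOn w (Set.Iio N)) (hf : w f = s) (hlt : ∀ q < f, w q ≠ s) :
    AntitoneOn (Function.update w f (s + 1)) (Set.Iio N) := by
  intro k hk k' hk' hkk'
  have hwkk' := hw hk hk' hkk'
  by_cases hk'f : k' = f
  · subst hk'f
    by_cases hkk'eq : k = k'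
    · rw [hkk'eq]
    · have := hlt k (lt_of_le_of_ne hkk' hkk'eq)
      simp only [Function.update_self, Function.update_of_ne hkk'eq]
      omega
  · by_cases hkf : k = f
    · subst hkf
      simp only [Function.update_self, Function.update_of_ne hk'f]
      omega
    · simpa only [Function.update_of_ne hkf, Function.update_of_ne hk'f] using hwkk'

namespace SkewRS

/-- `colStep w s i` is the pair (east, north) of edge values at row `i` of a single column with
west edges `w` and south edge `s`. -/
def colStep (w : ℕ → ℤ) (s : ℤ) : ℕ → ℤ × ℤ
  | 0 => if w 0 = s then (s + 1, s + 1) else (w 0, s)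
  | i + 1 =>
      let S := (colStep w s i).2
      if w (i + 1) = S then (S + 1, S + 1) else (w (i + 1), S)

def westCol (a b : ℕ → ℤ) : ℕ → ℕ → ℤ
  | 0 => a
  | j + 1 => fun i => (faceZ a b j i).1

theorem faceZ_eq_colStep (a b : ℕ → ℤ) : ∀ j i, faceZ a b j i = colStep (westCol a b j) (b j) i
  | 0, 0 => by rw [faceZ, colStep]; rfl
  | 0, i + 1 => by rw [faceZ, colStep, faceZ_eq_colStep a b 0 i]; rfl
  | j + 1, 0 => by rw [faceZ, colStep]; rfl
  | j + 1, i + 1 => by rw [faceZ, colStep, faceZ_eq_colStep a b (j + 1) i]; rfl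

theorem colStep_eq {w : ℕ → ℤ} {s : ℤ} {f N : ℕ} (hf : w f = s) (hlt : ∀ q < f, w q ≠ s)
    (hgt : ∀ q, f < q → q < N → w q ≠ s + 1) :
    ∀ i < N, colStep w s i = (Function.update w f (s + 1) i, if i < f then s else s + 1)
  | 0, _ => by
    rcases Nat.eq_zero_or_pos f with rfl | hf0
    · simp [colStep, hf]
    · simp [colStep, hlt 0 hf0, hf0, Function.update_of_ne hf0.ne]
  | i + 1, hi => by
    rw [colStep, colStep_eq hf hlt hgt i (by omega)]
    rcases lt_trichotomy (i + 1) f with h | rfl | h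
    · simp [hlt _ h, h, Function.update_of_ne h.ne, show i < f by omega]
    · simp [hf]
    · simp [show ¬ i < f by omega, show ¬ i + 1 < f by omega, Function.update_of_ne h.ne',
        hgt _ h hi]

/-- The first row below `N` where `w` takes the value `x`, and `N` if there is none. -/
def firstIdx (N : ℕ) (w : ℕ → ℤ) (x : ℤ) : ℕ :=
  Nat.find (⟨N, Or.inl le_rfl⟩ : ∃ q, N ≤ q ∨ w q = x)

section firstIdx

variable {N q : ℕ} {w : ℕ → ℤ} {x : ℤ}

theorem firstIdx_le (h : w q = x) : firstIdx N w x ≤ q :=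
  Nat.find_le (Or.inr h)

theorem apply_firstIdx (h : firstIdx N w x < N) : w (firstIdx N w x) = x :=
  (Nat.find_spec (⟨N, Or.inl le_rfl⟩ : ∃ q, N ≤ q ∨ w q = x)).resolve_left (not_le.2 h)

theorem apply_ne_of_lt_firstIdx (h : q < firstIdx N w x) : w q ≠ x :=
  fun hq => Nat.find_min _ h (Or.inr hq)

end firstIdx

def bumpRow (a b : ℕ → ℤ) (N j : ℕ) : ℕ := firstIdx N (westCol a b j) (b j)

/-- The west edges of column `j` are `a`, raised by one at the rows bumped by the columns before. -/
structure IsBumpState (a b : ℕ → ℤ) (N j : ℕ) : Prop where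
  bumpRow_lt : ∀ t < j, bumpRow a b N t < N
  apply_bumpRow : ∀ t < j, a (bumpRow a b N t) = b t
  injOn : Set.InjOn (bumpRow a b N) (Set.Iio j)
  westCol_of_ne : ∀ k < N, (∀ t < j, bumpRow a b N t ≠ k) → westCol a b j k = a k
  westCol_bumpRow : ∀ t < j, westCol a b j (bumpRow a b N t) = b t + 1
  antitoneOn : AntitoneOn (westCol a b j) (Set.Iio N)

section step

variable {a b : ℕ → ℤ} {N j : ℕ}

theorem faceZ_eq_of_bumpRow_lt (hw : AntitoneOn (westCol a b j) (Set.Iio N))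
    (hf : bumpRow a b N j < N) :
    ∀ i < N, faceZ a b j i = (Function.update (westCol a b j) (bumpRow a b N j) (b j + 1) i,
      if i < bumpRow a b N j then b j else b j + 1) := by
  intro i hi
  rw [faceZ_eq_colStep]
  refine colStep_eq (apply_firstIdx hf) (fun q hq => apply_ne_of_lt_firstIdx hq)
    (fun q hq hqN => ?_) i hi
  have hwf : westCol a b j (bumpRow a b N j) = b j := apply_firstIdx hf
  have := hw hf hqN hq.le
  omega

theorem IsBumpState.bumpRow_fresh (h : IsBumpState a b N j) (ha : AntitoneOn a (Set.Iio N))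
    {p : ℕ} (hpN : p < N) (hap : a p = b j) (hp : ∀ t < j, bumpRow a b N t ≠ p) :
    bumpRow a b N j < N ∧ ∀ t < j, bumpRow a b N t ≠ bumpRow a b N j := by
  have hfp : bumpRow a b N j ≤ p := firstIdx_le ((h.westCol_of_ne p hpN hp).trans hap)
  have hfN : bumpRow a b N j < N := hfp.trans_lt hpN
  refine ⟨hfN, fun t ht heq => ?_⟩
  have hbump := h.westCol_bumpRow t ht
  have hat := h.apply_bumpRow t ht
  rw [heq] at hbump hat
  have hfirst : westCol a b j (bumpRow a b N j) = b j := apply_firstIdx hfN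
  have hmono : a p ≤ a (bumpRow a b N j) := ha hfN hpN hfp
  omega

theorem IsBumpState.succ (h : IsBumpState a b N j) (hfN : bumpRow a b N j < N)
    (hfresh : ∀ t < j, bumpRow a b N t ≠ bumpRow a b N j) : IsBumpState a b N (j + 1) := by
  set f := bumpRow a b N j
  have hwest : ∀ i < N, westCol a b (j + 1) i = Function.update (westCol a b j) f (b j + 1) i :=
    fun i hi => congrArg Prod.fst (faceZ_eq_of_bumpRow_lt h.antitoneOn hfN i hi)
  have hwf : westCol a b j f = b j := apply_firstIdx hfN
  refine ⟨fun t ht => ?_, fun t ht => ?_, ?_, fun k hk hne => ?_, fun t ht => ?_, ?_⟩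
  · rcases Nat.lt_succ_iff_lt_or_eq.1 ht with ht | rfl
    exacts [h.bumpRow_lt t ht, hfN]
  · rcases Nat.lt_succ_iff_lt_or_eq.1 ht with ht | rfl
    exacts [h.apply_bumpRow t ht, (h.westCol_of_ne f hfN hfresh).symm.trans hwf]
  · intro t ht t' ht' heq
    rcases Nat.lt_succ_iff_lt_or_eq.1 ht with ht | rfl <;>
      rcases Nat.lt_succ_iff_lt_or_eq.1 ht' with ht' | rfl
    · exact h.injOn ht ht' heq
    · exact absurd heq (hfresh t ht)
    · exact absurd heq.symm (hfresh t' ht')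
    · rfl
  · rw [hwest k hk, Function.update_of_ne (hne j j.lt_succ_self).symm]
    exact h.westCol_of_ne k hk fun t ht => hne t (Nat.lt_succ_of_lt ht)
  · rcases Nat.lt_succ_iff_lt_or_eq.1 ht with ht | rfl
    · rw [hwest _ (h.bumpRow_lt t ht), Function.update_of_ne (hfresh t ht)]
      exact h.westCol_bumpRow t ht
    · rw [hwest f hfN, Function.update_self]
  · exact (h.antitoneOn.update_first_add_one hwf fun q hq => apply_ne_of_lt_firstIdx hq).congr
      fun i hi => (hwest i hi).symm

end step

open Finset in
theorem exists_lt_apply_eq_forall_ne {a : ℕ → ℤ} {g jdx : ℕ → ℕ} {N j : ℕ}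
    (hjdx : Set.InjOn jdx (Set.Iic j)) (hjN : ∀ t ≤ j, jdx t < N) (hg : Set.InjOn g (Set.Iio j))
    (hag : ∀ t < j, a (g t) = a (jdx t)) :
    ∃ p < N, a p = a (jdx j) ∧ ∀ t < j, g t ≠ p := by
  classical
  set T := (range j).filter fun t => a (jdx t) = a (jdx j)
  set S := (range N).filter fun p => a p = a (jdx j)
  have hjT : j ∉ T := by simp [T]
  have hcard : #(T.image g) < #S := calc
    #(T.image g) = #T := card_image_of_injOn (hg.mono fun t ht => by simp_all [T])
    _ < #(insert j T) := card_lt_card (ssubset_insert hjT)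
    _ ≤ #S := card_le_card_of_injOn jdx
      (fun t ht => by
        simp only [coe_insert, Set.mem_insert_iff, mem_coe, mem_filter, mem_range, T] at ht
        rcases ht with rfl | ⟨ht, hat⟩
        · simp [S, hjN t le_rfl]
        · simp [S, hjN t ht.le, hat])
      (hjdx.mono fun t ht => by
        simp only [coe_insert, Set.mem_insert_iff, mem_coe, mem_filter, mem_range, T] at ht
        rcases ht with rfl | ⟨ht, -⟩
        exacts [Set.mem_Iic.2 le_rfl, Set.mem_Iic.2 ht.le])
  obtain ⟨p, hpS, hpT⟩ := exists_mem_notMem_of_card_lt_card hcard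
  simp only [S, mem_filter, mem_range] at hpS
  refine ⟨p, hpS.1, hpS.2, fun t ht hgt => hpT (mem_image.2 ⟨t, ?_, hgt⟩)⟩
  simp only [T, mem_filter, mem_range]
  exact ⟨ht, (hag t ht).symm.trans (hgt ▸ hpS.2)⟩

theorem isBumpState_comp {a : ℕ → ℤ} {jdx : ℕ → ℕ} {N M : ℕ} (ha : AntitoneOn a (Set.Iio N))
    (hjN : ∀ t < M, jdx t < N) (hinj : Set.InjOn jdx (Set.Iio M)) :
    ∀ j ≤ M, IsBumpState a (fun t => a (jdx t)) N j
  | 0, _ => ⟨by simp, by simp, by simp, fun _ _ _ => rfl, by simp, ha⟩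
  | j + 1, hj => by
    have h := isBumpState_comp ha hjN hinj j (by omega)
    obtain ⟨p, hpN, hap, hp⟩ := exists_lt_apply_eq_forall_ne
      (hinj.mono fun t ht => by simp only [Set.mem_Iic, Set.mem_Iio] at ht ⊢; omega)
      (fun t ht => hjN t (by omega)) h.injOn h.apply_bumpRow
    obtain ⟨hfN, hfresh⟩ := h.bumpRow_fresh ha hpN hap hp
    exact h.succ hfN hfresh

end SkewRS

open SkewRS in
/-- Skew RS map of arrays: let `a ∈ ℤ^N` be weakly decreasing and let `b ∈ ℤ^M` be
the sub-array `b_i = a_{jdx i}` along strictly decreasing positions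
`jdx 0 > jdx 1 > ⋯`.  If `(a', b') = RS(a, b)` — i.e. `a' i = E(M,i)` and
`b' j = N(j,N)` in the edge configuration with west edges `a` and south edges `b` —
then `b' = (b₀+1, …, b_{M-1}+1)` and `a'` agrees with `a` except on a set of `M`
indices `jdx' 0, …, jdx' (M-1)` where `a' (jdx' i) = a (jdx i) + 1`. -/
theorem skewRS_subarray (N M : ℕ) (hM : 0 < M) (a : ℕ → ℤ) (jdx : ℕ → ℕ)
    (ha : ∀ i i', i ≤ i' → i' < N → a i' ≤ a i)
    (hj : ∀ i, i < M → jdx i < N)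
    (hjanti : ∀ i i', i < i' → i' < M → jdx i' < jdx i) :
    (∀ i, i < M → (faceZ a (fun t => a (jdx t)) i (N - 1)).2 = a (jdx i) + 1) ∧
    ∃ jdx' : ℕ → ℕ,
      (∀ i, i < M → jdx' i < N) ∧
      (∀ i i', i < M → i' < M → jdx' i = jdx' i' → i = i') ∧
      (∀ k, k < N → (∀ i, i < M → jdx' i ≠ k) →
        (faceZ a (fun t => a (jdx t)) (M - 1) k).1 = a k) ∧
      (∀ i, i < M →
        (faceZ a (fun t => a (jdx t)) (M - 1) (jdx' i)).1 = a (jdx i) + 1) := by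
  set b : ℕ → ℤ := fun t => a (jdx t)
  have hinj : Set.InjOn jdx (Set.Iio M) :=
    (show StrictAntiOn jdx (Set.Iio M) from fun i _ i' hi' h => hjanti i i' h hi').injOn
  have hstate := isBumpState_comp (fun i hi i' hi' h => ha i i' h hi') hj hinj
  have hM' := hstate M le_rfl
  have heast : ∀ k, (faceZ a b (M - 1) k).1 = westCol a b M k := by
    obtain ⟨m, rfl⟩ := Nat.exists_eq_add_of_lt hM
    exact fun k => rfl
  refine ⟨fun i hi => ?_, bumpRow a b N, hM'.bumpRow_lt, fun i i' hi hi' => hM'.injOn hi hi',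
    fun k hk hne => (heast k).trans (hM'.westCol_of_ne k hk hne),
    fun i hi => (heast _).trans (hM'.westCol_bumpRow i hi)⟩
  have hfN := hM'.bumpRow_lt i hi
  rw [faceZ_eq_of_bumpRow_lt (hstate i hi.le).antitoneOn hfN (N - 1) (by omega), if_neg (by omega)]
end

section
/- Transposition of the matrix (inversion of the weighted biword) preserves generalized Greene invariants: for every weighted biword π̄ and every k ≥ 1, I_k(π̄^{-1}) = I_k(π̄) and D_k(π̄^{-1}) = D_k(π̄). -/
open scoped Classical

/-- Cylinder equivalence `(j,i) ∼ (j + mn, i - mn)` on `ℤ²`, defining the twisted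
cylinder `𝒞_n = ℤ²/∼`. -/
def cylEq (n : ℕ) (p q : ℤ × ℤ) : Prop :=
  ∃ m : ℤ, q.1 = p.1 + m * n ∧ q.2 = p.2 - m * n

/-- A weighted biword / matrix `M̄ ∈ 𝕄̄_{n×n}`, seen as a `∼`-invariant point
configuration (with multiplicities) on the twisted cylinder. -/
def cylInv (n : ℕ) (M : ℤ → ℤ → ℕ) : Prop :=
  ∀ x y : ℤ, M (x + n) (y - n) = M x y

/-- Compact support (finitely many points in a fundamental domain). -/
def cylFin (n : ℕ) (M : ℤ → ℤ → ℕ) : Prop :=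
  Set.Finite {p : ℤ × ℤ | M p.1 p.2 ≠ 0 ∧ 1 ≤ p.2 ∧ p.2 ≤ (n : ℤ)}

/-- An (infinite) up-right path on the twisted cylinder. -/
def upRight (n : ℕ) (w : ℤ → ℤ × ℤ) : Prop :=
  ∀ l : ℤ, cylEq n ((w l).1 + 1, (w l).2) (w (l + 1)) ∨
    cylEq n ((w l).1, (w l).2 + 1) (w (l + 1))

/-- The length (number of points, with multiplicity, in a fundamental domain) of an
invariant sub-configuration. -/
noncomputable def clen (n : ℕ) (N : ℤ → ℤ → ℕ) : ℕ∞ :=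
  ∑' p : ℤ × ℤ, if 1 ≤ p.2 ∧ p.2 ≤ (n : ℤ) then (N p.1 p.2 : ℕ∞) else 0

/-- An increasing subsequence: an invariant sub-configuration all of whose points lie
on a common up-right path of the twisted cylinder. -/
def isIncr (n : ℕ) (N : ℤ → ℤ → ℕ) : Prop :=
  cylInv n N ∧ ∃ w : ℤ → ℤ × ℤ, upRight n w ∧
    ∀ x y : ℤ, N x y ≠ 0 → ∃ l : ℤ, cylEq n (x, y) (w l)

/-- A localized decreasing subsequence: a multiplicity-free invariant configuration
whose points form a strict down-right loop winding once around the cylinder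
(steps `(a_m, -b_m)` with `1 ≤ a_m, b_m ≤ n`, `∑ a_m = ∑ b_m = n`, and distinct
vertices). -/
def isLDS (n : ℕ) (N : ℤ → ℤ → ℕ) : Prop :=
  cylInv n N ∧ (∀ x y : ℤ, N x y ≤ 1) ∧
  ∃ (J : ℕ) (c : ℕ → ℤ × ℤ) (a b : ℕ → ℕ), 0 < J ∧
    (∀ m, m < J → 1 ≤ a m ∧ a m ≤ n ∧ 1 ≤ b m ∧ b m ≤ n) ∧
    (∑ m ∈ Finset.range J, a m) = n ∧
    (∑ m ∈ Finset.range J, b m) = n ∧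
    (∀ m, m < J →
      cylEq n ((c m).1 + (a m : ℤ), (c m).2 - (b m : ℤ)) (c ((m + 1) % J))) ∧
    (∀ m m', m < J → m' < J → cylEq n (c m) (c m') → m = m') ∧
    (∀ x y : ℤ, N x y ≠ 0 ↔ ∃ m, m < J ∧ cylEq n (x, y) (c m))

/-- Greene invariant `I_k`: the maximal total length of a disjoint union of `k`
increasing subsequences of `M`. -/
noncomputable def Ikk (n k : ℕ) (M : ℤ → ℤ → ℕ) : ℕ∞ :=
  ⨆ (N : Fin k → ℤ → ℤ → ℕ) (_ : (∀ m, isIncr n (N m)) ∧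
      ∀ x y : ℤ, (∑ m, N m x y) ≤ M x y), ∑ m, clen n (N m)

/-- Greene invariant `D_k`: the maximal total length of a disjoint union of `k`
localized decreasing subsequences of `M`. -/
noncomputable def Dkk (n k : ℕ) (M : ℤ → ℤ → ℕ) : ℕ∞ :=
  ⨆ (N : Fin k → ℤ → ℤ → ℕ) (_ : (∀ m, isLDS n (N m)) ∧
      ∀ x y : ℤ, (∑ m, N m x y) ≤ M x y), ∑ m, clen n (N m)

/-- Transposition of the matrix (inversion `π̄ ↦ π̄⁻¹` of the weighted biword). -/
def transp (M : ℤ → ℤ → ℕ) : ℤ → ℤ → ℕ := fun x y => M y x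

/-!
Transposition swaps the two coordinates of `ℤ²`, and the cylinder relation
`(j, i) ∼ (j + m n, i - m n)` is symmetric under this swap. Hence it turns an up-right
path into an up-right path, and a down-right loop with steps `(a, -b)` into one with
steps `(b, -a)` traversed in the opposite direction; so increasing and localized
decreasing subsequences of `M` correspond to those of its transpose. Lengths are
preserved too: the column strip `1 ≤ j ≤ n` is carried onto the row strip
`1 ≤ i ≤ n` by an antidiagonal shear by multiples of `n`, which leaves every
invariant configuration unchanged.
-/

lemma cylEq_swap {n : ℕ} {p q : ℤ × ℤ} (h : cylEq n p q) : cylEq n p.swap q.swap := by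
  obtain ⟨m, h1, h2⟩ := h
  exact ⟨-m, by simp only [Prod.fst_swap]; linarith, by simp only [Prod.snd_swap]; linarith⟩

lemma cylEq_swap_reverse_step {n : ℕ} {p q : ℤ × ℤ} {a b : ℤ}
    (h : cylEq n (p.1 + a, p.2 - b) q) : cylEq n (q.2 + b, q.1 - a) p.swap := by
  obtain ⟨m, h1, h2⟩ := h
  exact ⟨m, by simp only [Prod.fst_swap] at h2 ⊢; linarith,
    by simp only [Prod.snd_swap] at h1 ⊢; linarith⟩

lemma cylInv.apply_antidiag {n : ℕ} {N : ℤ → ℤ → ℕ} (h : cylInv n N) (t x y : ℤ) :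
    N (x + t * n) (y - t * n) = N x y := by
  induction t using Int.induction_on with
  | zero => simp
  | succ i ih => rw [← ih, ← h (x + i * n)]; congr 1 <;> ring
  | pred i ih => rw [← ih, ← h (x + (-(i : ℤ) - 1) * n)]; congr 1 <;> ring

lemma cylInv_transp {n : ℕ} {N : ℤ → ℤ → ℕ} (h : cylInv n N) : cylInv n (transp N) := by
  intro x y
  show N (y - n) (x + n) = N y x
  simpa [sub_eq_add_neg] using h.apply_antidiag (-1) y x

lemma isIncr_transp {n : ℕ} {N : ℤ → ℤ → ℕ} (h : isIncr n N) : isIncr n (transp N) := by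
  obtain ⟨hinv, w, hw, hmem⟩ := h
  refine ⟨cylInv_transp hinv, fun l => (w l).swap, fun l => ?_, fun x y hxy => ?_⟩
  · exact (hw l).symm.imp cylEq_swap cylEq_swap
  · obtain ⟨l, hl⟩ := hmem y x hxy
    exact ⟨l, cylEq_swap hl⟩

section loopRev

def loopRev (J m : ℕ) : ℕ := (J - m) % J

variable {J m : ℕ}

lemma loopRev_lt (hJ : 0 < J) : loopRev J m < J := Nat.mod_lt _ hJ

lemma loopRev_loopRev (hm : m < J) : loopRev J (loopRev J m) = m := by
  unfold loopRev
  rcases Nat.eq_zero_or_pos m with rfl | hm0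
  · simp
  · rw [Nat.mod_eq_of_lt (by omega : J - m < J), Nat.sub_sub_self hm.le, Nat.mod_eq_of_lt hm]

lemma loopRev_succ_mod (hm : m < J) : loopRev J ((m + 1) % J) = J - 1 - m := by
  unfold loopRev
  rcases (Nat.succ_le_of_lt hm).lt_or_eq with h | h
  · rw [Nat.mod_eq_of_lt h, Nat.mod_eq_of_lt (by omega)]
    omega
  · simp [← h]

lemma loopRev_eq_succ_mod (hm : m < J) : loopRev J m = (J - 1 - m + 1) % J := by
  rw [loopRev, show J - 1 - m + 1 = J - m by omega]

end loopRev

/-- The reversed loop visits `c 0, c (J - 1), …, c 1`; its `m`-th step is the original step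
`J - 1 - m` run backwards, with the roles of `a` and `b` exchanged. -/
lemma isLDS_transp {n : ℕ} {N : ℤ → ℤ → ℕ} (h : isLDS n N) : isLDS n (transp N) := by
  obtain ⟨hinv, hfree, J, c, a, b, hJ, hab, hsa, hsb, hstep, hdist, hmem⟩ := h
  refine ⟨cylInv_transp hinv, fun x y => hfree y x, J, fun m => (c (loopRev J m)).swap,
    fun m => b (J - 1 - m), fun m => a (J - 1 - m), hJ, fun m hm => ?_,
    by rw [Finset.sum_range_reflect, hsb], by rw [Finset.sum_range_reflect, hsa],
    fun m hm => ?_, fun m m' hm hm' he => ?_, fun x y => ?_⟩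
  · obtain ⟨h1, h2, h3, h4⟩ := hab (J - 1 - m) (by omega)
    exact ⟨h3, h4, h1, h2⟩
  · have := cylEq_swap_reverse_step (hstep (J - 1 - m) (by omega))
    rw [← loopRev_eq_succ_mod hm] at this
    simpa only [loopRev_succ_mod hm, Prod.fst_swap, Prod.snd_swap] using this
  · have := hdist _ _ (loopRev_lt hJ) (loopRev_lt hJ) (by simpa using cylEq_swap he)
    rw [← loopRev_loopRev hm, this, loopRev_loopRev hm']
  · show N y x ≠ 0 ↔ _
    rw [hmem y x]
    constructor
    · rintro ⟨i, hi, hci⟩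
      refine ⟨loopRev J i, loopRev_lt hJ, ?_⟩
      simpa only [loopRev_loopRev hi, Prod.swap_prod_mk] using cylEq_swap hci
    · rintro ⟨m, hm, hcm⟩
      exact ⟨loopRev J m, loopRev_lt hJ, by simpa using cylEq_swap hcm⟩

/-- `(z - 1) / n` is the index `k` of the block `[k n + 1, k n + n]` containing `z`. -/
def stripShift (n : ℕ) (p : ℤ × ℤ) : ℤ := (p.1 - 1) / n + (p.2 - 1) / n

lemma stripShift_antidiag (n : ℕ) (t x y : ℤ) :
    stripShift n (x + t * n, y - t * n) = stripShift n (x, y) := by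
  rcases eq_or_ne (n : ℤ) 0 with hn | hn
  · simp [stripShift, hn]
  · simp only [stripShift]
    rw [show x + t * n - 1 = x - 1 + t * n by ring, show y - t * n - 1 = y - 1 + (-t) * n by ring,
      Int.add_mul_ediv_right _ _ hn, Int.add_mul_ediv_right _ _ hn]
    ring

def stripEquiv (n : ℕ) : ℤ × ℤ ≃ ℤ × ℤ where
  toFun p := (p.1 + -stripShift n p * n, p.2 - -stripShift n p * n)
  invFun p := (p.1 + stripShift n p * n, p.2 - stripShift n p * n)
  left_inv p := by
    simp only [stripShift_antidiag]
    ext <;> ring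
  right_inv p := by
    simp only [stripShift_antidiag]
    ext <;> ring

lemma one_le_and_le_iff_ediv_eq_zero {n : ℤ} (hn : 0 < n) (z : ℤ) :
    (1 ≤ z ∧ z ≤ n) ↔ (z - 1) / n = 0 := by
  refine ⟨fun h => Int.ediv_eq_zero_of_lt (by omega) (by omega), fun h => ?_⟩
  have := Int.emod_add_mul_ediv (z - 1) n
  have := Int.emod_nonneg (z - 1) hn.ne'
  have := Int.emod_lt_of_pos (z - 1) hn
  rw [h] at *
  omega

lemma stripEquiv_fst_mem_iff (n : ℕ) (p : ℤ × ℤ) :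
    (1 ≤ (stripEquiv n p).1 ∧ (stripEquiv n p).1 ≤ n) ↔ (1 ≤ p.2 ∧ p.2 ≤ n) := by
  rcases Nat.eq_zero_or_pos n with rfl | hn
  · simp only [Nat.cast_zero]
    omega
  have hn' : (0 : ℤ) < n := by exact_mod_cast hn
  rw [one_le_and_le_iff_ediv_eq_zero hn', one_le_and_le_iff_ediv_eq_zero hn']
  change (p.1 + -stripShift n p * n - 1) / n = 0 ↔ _
  rw [show p.1 + -stripShift n p * n - 1 = p.1 - 1 + -stripShift n p * n by ring,
    Int.add_mul_ediv_right _ _ hn'.ne', stripShift]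
  omega

lemma cylInv.apply_stripEquiv {n : ℕ} {N : ℤ → ℤ → ℕ} (h : cylInv n N) (p : ℤ × ℤ) :
    N (stripEquiv n p).1 (stripEquiv n p).2 = N p.1 p.2 :=
  h.apply_antidiag _ _ _

lemma clen_transp {n : ℕ} {N : ℤ → ℤ → ℕ} (h : cylInv n N) : clen n (transp N) = clen n N :=
  calc clen n (transp N)
      = ∑' p : ℤ × ℤ, if 1 ≤ p.1 ∧ p.1 ≤ (n : ℤ) then (N p.1 p.2 : ℕ∞) else 0 :=
        (Equiv.prodComm ℤ ℤ).tsum_eq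
          fun p : ℤ × ℤ => if 1 ≤ p.1 ∧ p.1 ≤ (n : ℤ) then (N p.1 p.2 : ℕ∞) else 0
    _ = ∑' p : ℤ × ℤ, if 1 ≤ (stripEquiv n p).1 ∧ (stripEquiv n p).1 ≤ (n : ℤ) then
          (N (stripEquiv n p).1 (stripEquiv n p).2 : ℕ∞) else 0 :=
        ((stripEquiv n).tsum_eq _).symm
    _ = clen n N := tsum_congr fun p => by
        rw [h.apply_stripEquiv]
        exact if_congr (stripEquiv_fst_mem_iff n p) rfl rfl

/-- `Ikk n k` and `Dkk n k` are `greeneSup n k P` for `P = isIncr n` and `P = isLDS n`. -/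
noncomputable def greeneSup (n k : ℕ) (P : (ℤ → ℤ → ℕ) → Prop) (M : ℤ → ℤ → ℕ) : ℕ∞ :=
  ⨆ (N : Fin k → ℤ → ℤ → ℕ) (_ : (∀ m, P (N m)) ∧ ∀ x y : ℤ, (∑ m, N m x y) ≤ M x y),
    ∑ m, clen n (N m)

lemma greeneSup_transp_le {n k : ℕ} {P : (ℤ → ℤ → ℕ) → Prop}
    (hP : ∀ N, P N → P (transp N)) (hinv : ∀ N, P N → cylInv n N) (M : ℤ → ℤ → ℕ) :
    greeneSup n k P (transp M) ≤ greeneSup n k P M := by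
  refine iSup₂_le fun N ⟨hN, hle⟩ => le_iSup₂_of_le (fun m => transp (N m))
    ⟨fun m => hP _ (hN m), fun x y => hle y x⟩ (le_of_eq ?_)
  exact Finset.sum_congr rfl fun m _ => (clen_transp (hinv _ (hN m))).symm

lemma greeneSup_transp {n k : ℕ} {P : (ℤ → ℤ → ℕ) → Prop}
    (hP : ∀ N, P N → P (transp N)) (hinv : ∀ N, P N → cylInv n N) (M : ℤ → ℤ → ℕ) :
    greeneSup n k P (transp M) = greeneSup n k P M :=
  le_antisymm (greeneSup_transp_le hP hinv M) (greeneSup_transp_le hP hinv (transp M))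

theorem transpose_preserves_greene_general (n : ℕ) (M : ℤ → ℤ → ℕ) (k : ℕ) :
    Ikk n k (transp M) = Ikk n k M ∧ Dkk n k (transp M) = Dkk n k M :=
  ⟨greeneSup_transp (P := isIncr n) (fun _ => isIncr_transp) (fun _ h => h.1) M,
    greeneSup_transp (P := isLDS n) (fun _ => isLDS_transp) (fun _ h => h.1) M⟩

/-- Inversion of the weighted biword (transposition of the matrix) preserves the
generalized Greene invariants `I_k` and `D_k` for every `k ≥ 1`. -/
theorem transpose_preserves_greene (n : ℕ) (hn : 0 < n) (M : ℤ → ℤ → ℕ)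
    (hinv : cylInv n M) (hfin : cylFin n M) (k : ℕ) (hk : 1 ≤ k) :
    Ikk n k (transp M) = Ikk n k M ∧ Dkk n k (transp M) = Dkk n k M :=
  transpose_preserves_greene_general n M k
end
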